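/- arXiv:1402.2265 — 5 statements merged into one kernel-verified Lean document; each statement's English description precedes it below -/
import Mathlib

section
/- There exists a constant C > 0, depending only on μ0 and Λ_0, such that for every λ ∈ ℂ with λ ≠ μ0 one has dist(φ(λ), φ(S)) ≥ C · dist(λ, S) / (1 + |λ|)². -/
/-- Lemma 2.1 (distortion lemma): there is a constant `C = C(μ0, Λ 0) > 0` such that
`dist(φ(λ), φ(S)) ≥ C · dist(λ, S) / (1 + |λ|)²` for every `λ ≠ μ0`, where
`φ(λ) = (λ - μ0)⁻¹` and `S = {Λ j : j ∈ ℕ} ⊆ ℂ`. -/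
theorem stmt_0 (μ0 δ : ℝ) (hμ0 : μ0 < 0) (hδ : 0 < δ)
    (Λ : ℕ → ℝ) (hmono : StrictMono Λ) (hΛ0 : 0 ≤ Λ 0)
    (hgap : ∀ j, Λ (j + 1) - Λ j ≤ δ)
    (htend : Filter.Tendsto Λ Filter.atTop Filter.atTop) :
    ∃ C > 0, ∀ lam : ℂ, lam ≠ (μ0 : ℂ) →
      C * Metric.infDist lam (Set.range fun j => (Λ j : ℂ)) / (1 + ‖lam‖) ^ 2 ≤
        Metric.infDist ((lam - (μ0 : ℂ))⁻¹)
          ((fun z : ℂ => (z - (μ0 : ℂ))⁻¹) '' (Set.range fun j => (Λ j : ℂ))) := by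
  set M : ℝ := (1 + |μ0|) * (2 + Λ 0 + |μ0|) with hMdef
  have hM1 : 1 ≤ M := by
    have h1 : (1:ℝ) ≤ 1 + |μ0| := by have := abs_nonneg μ0; linarith
    have h2 : (1:ℝ) ≤ 2 + Λ 0 + |μ0| := by
      have := abs_nonneg μ0; linarith
    calc (1:ℝ) = 1 * 1 := by ring
    _ ≤ M := by apply mul_le_mul h1 h2 one_pos.le (by linarith)
  have hMpos : 0 < M := lt_of_lt_of_le one_pos hM1
  refine ⟨1 / M, by positivity, ?_⟩
  intro lam hlam
  set L : ℝ := ‖lam‖ with hL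
  have hL0 : 0 ≤ L := norm_nonneg lam
  set a : ℝ := ‖lam - (μ0 : ℂ)‖ with ha
  have hapos : 0 < a := by
    rw [ha]
    exact norm_pos_iff.mpr (sub_ne_zero.mpr hlam)
  set d : ℝ := Metric.infDist lam (Set.range fun j => (Λ j : ℂ)) with hd
  have hd0 : 0 ≤ d := Metric.infDist_nonneg
  -- d ≤ |lam - Λ 0| ≤ L + Λ 0
  have hdΛ0 : d ≤ L + Λ 0 := by
    have hmem : ((Λ 0 : ℂ)) ∈ Set.range fun j => (Λ j : ℂ) := ⟨0, rfl⟩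
    have h1 : d ≤ dist lam ((Λ 0 : ℂ)) := Metric.infDist_le_dist_of_mem hmem
    have h2 : dist lam ((Λ 0 : ℂ)) ≤ L + Λ 0 := by
      rw [Complex.dist_eq]
      calc ‖lam - (Λ 0 : ℂ)‖ ≤ ‖lam‖ + ‖((Λ 0 : ℂ))‖ :=
            norm_sub_le lam _
      _ = L + Λ 0 := by rw [Complex.norm_real, Real.norm_eq_abs, abs_of_nonneg hΛ0]
    linarith
  have haL : a ≤ L + |μ0| := by
    rw [ha]
    calc ‖lam - (μ0 : ℂ)‖ ≤ ‖lam‖ + ‖((μ0 : ℂ))‖ :=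
          norm_sub_le lam _
    _ = L + |μ0| := by rw [Complex.norm_real, Real.norm_eq_abs]
  -- a*(d+a) ≤ M*(1+L)^2
  have h2 : a * (d + a) ≤ M * (1 + L) ^ 2 := by
    have e1 : a ≤ (1 + |μ0|) * (1 + L) := by nlinarith [abs_nonneg μ0]
    have e2 : d + a ≤ (2 + Λ 0 + |μ0|) * (1 + L) := by nlinarith [abs_nonneg μ0]
    have e3 : (0:ℝ) ≤ d + a := by linarith
    calc a * (d + a) ≤ ((1 + |μ0|) * (1 + L)) * ((2 + Λ 0 + |μ0|) * (1 + L)) :=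
          mul_le_mul e1 e2 e3 (by positivity)
    _ = M * (1 + L) ^ 2 := by ring
  -- nonempty image
  have hne : ((fun z : ℂ => (z - (μ0 : ℂ))⁻¹) '' (Set.range fun j => (Λ j : ℂ))).Nonempty :=
    ⟨_, ⟨(Λ 0 : ℂ), ⟨0, rfl⟩, rfl⟩⟩
  refine le_of_not_gt fun hcon => ?_
  obtain ⟨w, hw, hlt⟩ := (Metric.infDist_lt_iff hne).1 hcon
  obtain ⟨y, ⟨j, rfl⟩, rfl⟩ := hw
  refine absurd hlt (not_lt.2 ?_)
  set b : ℝ := ‖(Λ j : ℂ) - (μ0 : ℂ)‖ with hb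
  have hΛj : 0 ≤ Λ j := le_trans hΛ0 (hmono.monotone (Nat.zero_le j))
  have hbval : b = Λ j - μ0 := by
    rw [hb, ← Complex.ofReal_sub, Complex.norm_real, Real.norm_eq_abs, abs_of_pos (by linarith)]
  have hbpos : 0 < b := by rw [hbval]; linarith
  have hy : ((Λ j : ℂ)) ≠ (μ0 : ℂ) := by
    intro h
    have := Complex.ofReal_inj.mp h
    linarith
  set t : ℝ := ‖lam - (Λ j : ℂ)‖ with ht
  have ht0 : 0 ≤ t := norm_nonneg _
  have hdt : d ≤ t := by
    have hmemj : ((Λ j : ℂ)) ∈ Set.range fun k => (Λ k : ℂ) := ⟨j, rfl⟩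
    have := Metric.infDist_le_dist_of_mem (x := lam) hmemj
    rwa [Complex.dist_eq] at this
  have hbt : b ≤ t + a := by
    rw [hb, ht, ha]
    calc ‖(Λ j : ℂ) - (μ0 : ℂ)‖
        = ‖((Λ j : ℂ) - lam) + (lam - (μ0 : ℂ))‖ := by rw [sub_add_sub_cancel]
    _ ≤ ‖(Λ j : ℂ) - lam‖ + ‖lam - (μ0 : ℂ)‖ := norm_add_le _ _
    _ = ‖lam - (Λ j : ℂ)‖ + ‖lam - (μ0 : ℂ)‖ := by
        rw [norm_sub_rev]
  -- dist formula
  have hdist : dist ((lam - (μ0 : ℂ))⁻¹) (((Λ j : ℂ) - (μ0 : ℂ))⁻¹) = t / (a * b) := by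
    rw [Complex.dist_eq]
    have heq : (lam - (μ0 : ℂ))⁻¹ - ((Λ j : ℂ) - (μ0 : ℂ))⁻¹
        = ((Λ j : ℂ) - lam) / ((lam - (μ0 : ℂ)) * ((Λ j : ℂ) - (μ0 : ℂ))) := by
      rw [eq_div_iff (mul_ne_zero (sub_ne_zero.mpr hlam) (sub_ne_zero.mpr hy))]
      rw [sub_mul, inv_mul_cancel_left₀ (sub_ne_zero.mpr hlam),
        mul_comm (lam - (μ0 : ℂ)), inv_mul_cancel_left₀ (sub_ne_zero.mpr hy)]
      ring
    rw [heq, norm_div, norm_mul, norm_sub_rev, ← ht, ← ha, ← hb]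
  rw [hdist]
  rw [div_le_div_iff₀ (by positivity) (by positivity)]
  -- goal: 1/M * d * (a*b) ≤ t * (1+L)^2
  have h1 : d * b ≤ t * (d + a) := by nlinarith
  have key : d * (a * b) ≤ t * (M * (1 + L) ^ 2) := by
    calc d * (a * b) = a * (d * b) := by ring
    _ ≤ a * (t * (d + a)) := by nlinarith
    _ = t * (a * (d + a)) := by ring
    _ ≤ t * (M * (1 + L) ^ 2) := by nlinarith
  have hX : 0 ≤ d * (a * b) := by positivity
  calc 1 / M * d * (a * b) = (1 / M) * (d * (a * b)) := by ring
  _ ≤ (1 / M) * (t * (M * (1 + L) ^ 2)) := by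
      apply mul_le_mul_of_nonneg_left key (by positivity)
  _ = t * (1 + L) ^ 2 := by field_simp
end

section
/- There exists a constant C > 0, depending only on μ0 and Λ_0, such that for every λ ∈ ℂ with λ ≠ μ0 one has dist(φ(λ), φ(J)) ≥ C · dist(λ, J) / (1 + |λ|)². -/
private lemma aux_le_infDist {s : Set ℂ} (hs : s.Nonempty) {x : ℂ} {b : ℝ}
    (h : ∀ y ∈ s, b ≤ dist x y) : b ≤ Metric.infDist x s := by
  by_contra hc
  push_neg at hc
  rw [Metric.infDist_lt_iff hs] at hc
  obtain ⟨y, hy, hlt⟩ := hc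
  exact absurd (h y hy) (not_le.mpr hlt)

private lemma aux_abs_sub (a b : ℂ) : ‖a - b‖ ≤ ‖a‖ + ‖b‖ := by
  simpa using norm_sub_le a b

/-- Lemma 2.2: there is a constant `C = C(μ0, Λ0) > 0` such that
`dist(φ(λ), φ(J)) ≥ C · dist(λ, J) / (1 + |λ|)²` for every `λ ≠ μ0`, where
`φ(λ) = (λ - μ0)⁻¹` and `J = [Λ0, ∞) ⊆ ℝ ⊆ ℂ`. -/
theorem stmt_1 (μ0 Λ0 : ℝ) (hμ0 : μ0 < 0) (hΛ0 : 0 ≤ Λ0) :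
    ∃ C > 0, ∀ lam : ℂ, lam ≠ (μ0 : ℂ) →
      C * Metric.infDist lam (Complex.ofReal '' Set.Ici Λ0) / (1 + ‖lam‖) ^ 2 ≤
        Metric.infDist ((lam - (μ0 : ℂ))⁻¹)
          ((fun z : ℂ => (z - (μ0 : ℂ))⁻¹) '' (Complex.ofReal '' Set.Ici Λ0)) := by
  set K : ℝ := 1 - μ0 with hKdef
  have hK1 : (1:ℝ) ≤ K := by rw [hKdef]; linarith
  have hK0 : (0:ℝ) < K := by linarith
  refine ⟨1 / (2 * K ^ 2 * (1 + Λ0)), by positivity, ?_⟩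
  intro lam hlam
  set A := ‖lam‖ with hAdef
  have hA0 : (0:ℝ) ≤ A := norm_nonneg lam
  set M : ℝ := 1 + A with hMdef
  have hM0 : (0:ℝ) < M := by positivity
  set D := Metric.infDist lam (Complex.ofReal '' Set.Ici Λ0) with hDdef
  have hD0 : (0:ℝ) ≤ D := Metric.infDist_nonneg
  have hmemΛ : (Λ0:ℂ) ∈ Complex.ofReal '' Set.Ici Λ0 := ⟨Λ0, Set.self_mem_Ici, rfl⟩
  have hDle : D ≤ (1 + Λ0) * M := by
    have h1 : D ≤ dist lam ((Λ0:ℂ)) := Metric.infDist_le_dist_of_mem hmemΛ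
    have h2 : dist lam ((Λ0:ℂ)) ≤ A + Λ0 := by
      rw [Complex.dist_eq]
      calc ‖lam - Λ0‖ ≤ ‖lam‖ + ‖((Λ0:ℂ))‖ := aux_abs_sub _ _
        _ = A + Λ0 := by rw [Complex.norm_real, Real.norm_eq_abs, abs_of_nonneg hΛ0]
    nlinarith
  have hlne : lam - (μ0:ℂ) ≠ 0 := sub_ne_zero.mpr hlam
  have hB0 : (0:ℝ) < ‖lam - μ0‖ := norm_pos_iff.mpr hlne
  set B := ‖lam - μ0‖ with hBdef
  have hBle : B ≤ K * M := by
    calc B ≤ ‖lam‖ + ‖((μ0:ℂ))‖ := aux_abs_sub _ _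
      _ = A - μ0 := by rw [Complex.norm_real, Real.norm_eq_abs, abs_of_neg hμ0]; ring
      _ ≤ K * M := by nlinarith
  apply aux_le_infDist
  · exact ⟨((Λ0:ℂ) - μ0)⁻¹, ⟨(Λ0:ℂ), hmemΛ, rfl⟩⟩
  rintro y ⟨w, ⟨μ, hμ, rfl⟩, rfl⟩
  have hμΛ : Λ0 ≤ μ := hμ
  have hμ0' : (0:ℝ) < μ - μ0 := by linarith
  have hμne : ((μ:ℂ) - μ0) ≠ 0 := by
    rw [← Complex.ofReal_sub]
    exact_mod_cast ne_of_gt hμ0'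
  set L := ‖lam - μ‖ with hLdef
  have hmemμ : (μ:ℂ) ∈ Complex.ofReal '' Set.Ici Λ0 := ⟨μ, hμ, rfl⟩
  have hDL : D ≤ L := by
    have h := Metric.infDist_le_dist_of_mem (x := lam) hmemμ
    rwa [Complex.dist_eq] at h
  have hL0 : (0:ℝ) ≤ L := norm_nonneg _
  have hdist : dist ((lam - (μ0:ℂ))⁻¹) (((μ:ℂ) - μ0)⁻¹) = L / (B * (μ - μ0)) := by
    rw [Complex.dist_eq]
    have heq : (lam - (μ0:ℂ))⁻¹ - ((μ:ℂ) - μ0)⁻¹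
        = ((μ:ℂ) - lam) * ((lam - (μ0:ℂ))⁻¹ * (((μ:ℂ) - μ0)⁻¹)) := by
      field_simp
      ring
    rw [heq, norm_mul, norm_mul, norm_inv, norm_inv]
    have h1 : ‖(μ:ℂ) - lam‖ = L := by
      rw [hLdef, norm_sub_rev]
    have h2 : ‖(μ:ℂ) - μ0‖ = μ - μ0 := by
      rw [← Complex.ofReal_sub, Complex.norm_real, Real.norm_eq_abs, abs_of_pos hμ0']
    rw [h1, h2, ← hBdef]
    field_simp
  show 1 / (2 * K ^ 2 * (1 + Λ0)) * D / M ^ 2 ≤ dist _ _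
  rw [hdist]
  have hCrw : 1 / (2 * K ^ 2 * (1 + Λ0)) * D / M ^ 2
      = D / (2 * K ^ 2 * (1 + Λ0) * M ^ 2) := by
    rw [one_div_mul_eq_div, div_div]
  rw [hCrw]
  by_cases hcase : μ - μ0 ≤ 2 * K * M
  · calc D / (2 * K ^ 2 * (1 + Λ0) * M ^ 2)
        ≤ D / (2 * K ^ 2 * M ^ 2) := by
          apply div_le_div₀ hD0 le_rfl (by positivity)
          nlinarith [mul_nonneg (mul_nonneg (sq_nonneg K) (sq_nonneg M)) hΛ0]
      _ ≤ L / (B * (μ - μ0)) := by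
          apply div_le_div₀ hL0 hDL (by positivity)
          calc B * (μ - μ0)
              ≤ (K * M) * (2 * K * M) :=
                mul_le_mul hBle hcase (le_of_lt hμ0') (by positivity)
            _ = 2 * K ^ 2 * M ^ 2 := by ring
  · push_neg at hcase
    have hLge : μ - A ≤ L := by
      have h1 : |(lam - (μ:ℂ)).re| ≤ L := Complex.abs_re_le_norm _
      have h2 : (lam - (μ:ℂ)).re = lam.re - μ := by simp
      have h3 : lam.re ≤ A := by
        calc lam.re ≤ |lam.re| := le_abs_self _
          _ ≤ A := Complex.abs_re_le_norm lam
      rw [h2] at h1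
      have := neg_abs_le (lam.re - μ)
      linarith
    have hhalf : μ - μ0 ≤ 2 * L := by nlinarith
    calc D / (2 * K ^ 2 * (1 + Λ0) * M ^ 2)
        ≤ ((1 + Λ0) * M) / (2 * K ^ 2 * (1 + Λ0) * M ^ 2) :=
          div_le_div₀ (by positivity) hDle (by positivity) le_rfl
      _ = 1 / (2 * K ^ 2 * M) := by
          rw [div_eq_div_iff (by positivity) (by positivity)]
          ring
      _ ≤ 1 / (2 * K * M) := by
          apply one_div_le_one_div_of_le (by positivity)
          nlinarith
      _ ≤ L / (B * (μ - μ0)) := by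
          rw [div_le_div_iff₀ (by positivity) (by positivity)]
          calc 1 * (B * (μ - μ0)) = B * (μ - μ0) := one_mul _
            _ ≤ (K * M) * (2 * L) :=
                mul_le_mul hBle hhalf (le_of_lt hμ0') (by positivity)
            _ = L * (2 * K * M) := by ring
end

section
/- For each j ∈ ℕ set r_j = dist(Λ_j, S ∖ {Λ_j}) and let A = ⋃_{j ∈ ℕ} B(Λ_j, 2 r_j), the union of the open balls in ℂ of centre Λ_j and radius 2 r_j. Then there exists a constant C > 0, depending only on μ0, such that for every λ ∈ A with λ ≠ μ0 one has dist(φ(λ), φ(S)) ≥ C · dist(λ, S) / (1 + |λ|)². -/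
/-- Lemma 2.3 (ii): with `r j = dist(Λ j, S \ {Λ j})` and `A = ⋃ j, B(Λ j, 2 r j)`,
there is a constant `C = C(μ0) > 0` such that for every `λ ∈ A` with `λ ≠ μ0`,
`dist(φ(λ), φ(S)) ≥ C · dist(λ, S) / (1 + |λ|)²`. -/
theorem stmt_4 (μ0 δ : ℝ) (hμ0 : μ0 < 0) (hδ : 0 < δ)
    (Λ : ℕ → ℝ) (hmono : StrictMono Λ) (hΛ0 : 0 ≤ Λ 0)
    (hgap : ∀ j, Λ (j + 1) - Λ j ≤ δ)
    (htend : Filter.Tendsto Λ Filter.atTop Filter.atTop) :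
    ∃ C > 0, ∀ lam : ℂ,
      lam ∈ ⋃ j : ℕ, Metric.ball ((Λ j : ℂ))
        (2 * Metric.infDist ((Λ j : ℂ)) ((Set.range fun i => (Λ i : ℂ)) \ {(Λ j : ℂ)})) →
      lam ≠ (μ0 : ℂ) →
      C * Metric.infDist lam (Set.range fun i => (Λ i : ℂ)) / (1 + ‖lam‖) ^ 2 ≤
        Metric.infDist ((lam - (μ0 : ℂ))⁻¹)
          ((fun z : ℂ => (z - (μ0 : ℂ))⁻¹) '' (Set.range fun i => (Λ i : ℂ))) := by
  set m : ℝ := -μ0 with hm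
  have hm0 : 0 < m := by rw [hm]; linarith
  have hμval : ‖(μ0 : ℂ)‖ = m := by
    rw [Complex.norm_real, Real.norm_eq_abs, abs_of_neg hμ0, hm]
  clear_value m
  have h1m : (0:ℝ) < 1 + m := by linarith
  set S : Set ℂ := Set.range fun i => (Λ i : ℂ) with hS
  have hΛnn : ∀ i, 0 ≤ Λ i := fun i => hΛ0.trans (hmono.monotone (Nat.zero_le i))
  have hpos1 : (0:ℝ) < 1/(2*(1+m)^2) :=
    div_pos one_pos (mul_pos (by norm_num) (pow_pos h1m 2))
  have hpos2 : (0:ℝ) < 1/(4*δ*(1+m)+1) :=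
    div_pos one_pos (by nlinarith [mul_pos hδ h1m])
  refine ⟨min (1/(2*(1+m)^2)) (1/(4*δ*(1+m)+1)), lt_min hpos1 hpos2, ?_⟩
  set C : ℝ := min (1/(2*(1+m)^2)) (1/(4*δ*(1+m)+1)) with hCdef
  have hC0 : 0 < C := lt_min hpos1 hpos2
  have hC1 : C ≤ 1/(2*(1+m)^2) := min_le_left _ _
  have hC2 : C ≤ 1/(4*δ*(1+m)+1) := min_le_right _ _
  clear_value C
  intro lam hlam hne
  obtain ⟨j, hj⟩ := Set.mem_iUnion.mp hlam
  set a : ℝ := ‖lam‖ with ha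
  have ha0 : 0 ≤ a := by rw [ha]; exact norm_nonneg _
  set d : ℝ := Metric.infDist lam S with hd
  have hd0 : 0 ≤ d := by rw [hd]; exact Metric.infDist_nonneg
  -- d ≤ 2δ
  have hrj : Metric.infDist ((Λ j : ℂ)) (S \ {(Λ j : ℂ)}) ≤ δ := by
    have hmem : ((Λ (j+1) : ℝ) : ℂ) ∈ S \ {(Λ j : ℂ)} := by
      refine ⟨⟨j+1, rfl⟩, ?_⟩
      simp only [Set.mem_singleton_iff]
      intro h
      have h' : Λ (j+1) = Λ j := by exact_mod_cast h
      have := hmono (Nat.lt_succ_self j)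
      linarith
    calc Metric.infDist ((Λ j : ℂ)) (S \ {(Λ j : ℂ)})
        ≤ dist ((Λ j : ℂ)) ((Λ (j+1) : ℂ)) := Metric.infDist_le_dist_of_mem hmem
      _ = |Λ j - Λ (j+1)| := by rw [Complex.isometry_ofReal.dist_eq, Real.dist_eq]
      _ ≤ δ := by
          have := hmono (Nat.lt_succ_self j)
          rw [abs_of_nonpos (by linarith)]
          linarith [hgap j]
  have hd2δ : d ≤ 2*δ := by
    have h1 : d ≤ dist lam ((Λ j : ℂ)) := by
      rw [hd]; exact Metric.infDist_le_dist_of_mem ⟨j, rfl⟩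
    have h2 := Metric.mem_ball.mp hj
    linarith
  have he1 : ‖lam - (μ0:ℂ)‖ ≤ (1+m)*(1+a) := by
    have h0 := norm_sub_le lam ((μ0:ℂ))
    rw [hμval, ← ha] at h0
    nlinarith [mul_nonneg hm0.le ha0]
  have he0 : 0 < ‖lam - (μ0:ℂ)‖ := by
    rw [norm_pos_iff]
    exact sub_ne_zero.mpr hne
  clear_value a d
  -- reduce to a pointwise bound
  by_contra hcon
  push_neg at hcon
  have hTne : ((fun z : ℂ => (z - (μ0:ℂ))⁻¹) '' S).Nonempty :=
    ⟨(((Λ 0 : ℂ)) - (μ0:ℂ))⁻¹, Set.mem_image_of_mem _ ⟨0, rfl⟩⟩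
  obtain ⟨y, hy, hlt⟩ := (Metric.infDist_lt_iff hTne).mp hcon
  obtain ⟨z, ⟨i, rfl⟩, rfl⟩ := hy
  set t : ℝ := Λ i + m with ht
  have ht0 : 0 < t := by rw [ht]; linarith [hΛnn i]
  have hbC : ((Λ i : ℂ)) - (μ0:ℂ) = ((Λ i - μ0 : ℝ) : ℂ) := by push_cast; ring
  have hb : ((Λ i : ℂ)) - (μ0:ℂ) ≠ 0 := by
    rw [hbC]
    exact Complex.ofReal_ne_zero.mpr (by intro h; linarith [hΛnn i])
  have haC : lam - (μ0:ℂ) ≠ 0 := sub_ne_zero.mpr hne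
  set X : ℝ := ‖lam - ((Λ i : ℂ))‖ with hX
  have hX0 : 0 ≤ X := by rw [hX]; exact norm_nonneg _
  have hdist : dist ((lam - (μ0:ℂ))⁻¹) ((fun z : ℂ => (z - (μ0:ℂ))⁻¹) ((Λ i : ℂ)))
      = X / (‖lam - (μ0:ℂ)‖ * t) := by
    simp only [Complex.dist_eq]
    have heq : (lam - (μ0:ℂ))⁻¹ - (((Λ i : ℂ)) - (μ0:ℂ))⁻¹
        = (((Λ i : ℂ)) - lam) / ((lam - (μ0:ℂ)) * (((Λ i : ℂ)) - (μ0:ℂ))) := by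
      field_simp
      ring
    rw [heq, norm_div, norm_mul]
    have h1 : ‖((Λ i : ℂ)) - lam‖ = X := by
      rw [hX]; exact norm_sub_rev _ _
    have h2 : ‖((Λ i : ℂ)) - (μ0:ℂ)‖ = t := by
      rw [hbC, Complex.norm_real, Real.norm_eq_abs, abs_of_pos (by linarith [hΛnn i] : (0:ℝ) < Λ i - μ0),
        ht, hm]
      ring
    rw [h1, h2]
  rw [hdist] at hlt
  have hdX : d ≤ X := by
    have hiS : ((Λ i : ℂ)) ∈ S := ⟨i, rfl⟩
    have h := Metric.infDist_le_dist_of_mem (x := lam) hiS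
    rw [Complex.dist_eq] at h
    rw [hd, hX]
    exact h
  have hXlow : Λ i - a ≤ X := by
    have h1 := norm_sub_norm_le ((Λ i : ℂ)) lam
    have h2 : ‖(Λ i : ℂ)‖ = Λ i := by
      rw [Complex.norm_real, Real.norm_eq_abs, abs_of_nonneg (hΛnn i)]
    have h3 : ‖((Λ i : ℂ)) - lam‖ = X := by
      rw [hX]; exact norm_sub_rev _ _
    rw [h2, h3, ← ha] at h1
    exact h1
  clear_value X t
  have hmain : C * d * (‖lam - (μ0:ℂ)‖ * t) ≤ X * (1+a)^2 := by
    by_cases hcase : Λ i ≤ 2*a + m + 2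
    · have htle : t ≤ (2+2*m)*(1+a) := by nlinarith [mul_nonneg hm0.le ha0]
      have het : ‖lam - (μ0:ℂ)‖ * t ≤ 2*(1+m)^2*(1+a)^2 := by
        have h4 := mul_le_mul he1 htle ht0.le
          (mul_nonneg (by linarith) (by linarith))
        have h5 : (1+m)*(1+a) * ((2+2*m)*(1+a)) = 2*(1+m)^2*(1+a)^2 := by ring
        linarith
      have hCet : C * (‖lam - (μ0:ℂ)‖ * t) ≤ (1+a)^2 := by
        calc C * (‖lam - (μ0:ℂ)‖ * t)
            ≤ (1/(2*(1+m)^2)) * (2*(1+m)^2*(1+a)^2) :=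
              mul_le_mul hC1 het (mul_nonneg he0.le ht0.le) hpos1.le
          _ = (1+a)^2 := by field_simp
      calc C * d * (‖lam - (μ0:ℂ)‖ * t)
          = d * (C * (‖lam - (μ0:ℂ)‖ * t)) := by ring
        _ ≤ d * (1+a)^2 := mul_le_mul_of_nonneg_left hCet hd0
        _ ≤ X * (1+a)^2 := mul_le_mul_of_nonneg_right hdX (by positivity)
    · push_neg at hcase
      have ht2X : t ≤ 2*X := by linarith
      have hC2' : C * (2*δ*(1+m)) ≤ 1/2 := by
        have h1 : C * (4*δ*(1+m)+1) ≤ 1 := by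
          calc C * (4*δ*(1+m)+1) ≤ (1/(4*δ*(1+m)+1)) * (4*δ*(1+m)+1) :=
                mul_le_mul_of_nonneg_right hC2 (by nlinarith [mul_pos hδ h1m])
            _ = 1 := by field_simp
        linarith
      have h1 : d * ‖lam - (μ0:ℂ)‖ ≤ (2*δ) * ((1+m)*(1+a)) :=
        mul_le_mul hd2δ he1 he0.le (by linarith)
      have h2 : C * (d * ‖lam - (μ0:ℂ)‖) ≤ (1/2) * (1+a) := by
        calc C * (d * ‖lam - (μ0:ℂ)‖)
            ≤ C * ((2*δ) * ((1+m)*(1+a))) := mul_le_mul_of_nonneg_left h1 hC0.le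
          _ = (C * (2*δ*(1+m))) * (1+a) := by ring
          _ ≤ (1/2) * (1+a) := mul_le_mul_of_nonneg_right hC2' (by linarith)
      calc C * d * (‖lam - (μ0:ℂ)‖ * t)
          = (C * (d * ‖lam - (μ0:ℂ)‖)) * t := by ring
        _ ≤ ((1/2) * (1+a)) * t := mul_le_mul_of_nonneg_right h2 ht0.le
        _ ≤ ((1/2) * (1+a)) * (2*X) := mul_le_mul_of_nonneg_left ht2X (by linarith)
        _ = X * (1+a) := by ring
        _ ≤ X * (1+a)^2 := by
            have h9 : (1+a) ≤ (1+a)^2 := by linarith [sq_nonneg a]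
            exact mul_le_mul_of_nonneg_left h9 hX0
  have hfinal : C * d / (1+a)^2 ≤ X / (‖lam - (μ0:ℂ)‖ * t) := by
    rw [div_le_div_iff₀ (by positivity) (mul_pos he0 ht0)]
    exact hmain
  exact absurd (hfinal.trans_lt hlt) (lt_irrefl _)
end

section
/- For every λ ∈ ℂ with λ ≠ μ0, Re(λ) ≥ μ0 and |λ − (μ0 + Λ_0)/2| ≥ (Λ_0 − μ0)/2 one has dist(φ(λ), φ(J)) = |Im(φ(λ))| = |Im(λ)| / |λ − μ0|². Moreover, if Re(λ) ≥ Λ_0 then also dist(λ, J) = |Im(λ)|. -/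
/-- Third and fourth sectors in the proof of Lemma 2.2: for `λ ≠ μ0` with
`Re(λ) ≥ μ0` lying outside the open disk of centre `(μ0 + Λ0)/2` and radius
`(Λ0 - μ0)/2` one has `dist(φ(λ), φ(J)) = |Im(φ(λ))| = |Im(λ)|/|λ - μ0|²`;
moreover if `Re(λ) ≥ Λ0` then `dist(λ, J) = |Im(λ)|`. -/
theorem stmt_7 (μ0 Λ0 : ℝ) (hμ0 : μ0 < 0) (hΛ0 : 0 ≤ Λ0) :
    ∀ lam : ℂ, lam ≠ (μ0 : ℂ) → μ0 ≤ lam.re →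
      (Λ0 - μ0) / 2 ≤ ‖lam - ((((μ0 + Λ0) / 2 : ℝ)) : ℂ)‖ →
      (Metric.infDist ((lam - (μ0 : ℂ))⁻¹)
          ((fun z : ℂ => (z - (μ0 : ℂ))⁻¹) '' (Complex.ofReal '' Set.Ici Λ0)) =
        |((lam - (μ0 : ℂ))⁻¹).im| ∧
      |((lam - (μ0 : ℂ))⁻¹).im| = |lam.im| / ‖lam - (μ0 : ℂ)‖ ^ 2) ∧
      (Λ0 ≤ lam.re →
        Metric.infDist lam (Complex.ofReal '' Set.Ici Λ0) = |lam.im|) := by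
  intro lam hne hre hdisk
  set z : ℂ := lam - (μ0 : ℂ) with hz
  have hz0 : z ≠ 0 := sub_ne_zero.mpr hne
  have hns : 0 < Complex.normSq z := Complex.normSq_pos.mpr hz0
  have hzre : z.re = lam.re - μ0 := by simp [hz]
  have hzim : z.im = lam.im := by simp [hz]
  have hr : 0 < Λ0 - μ0 := by linarith
  set w : ℂ := z⁻¹ with hw
  have hwre : w.re = z.re / Complex.normSq z := Complex.inv_re z
  have hwim : w.im = -z.im / Complex.normSq z := Complex.inv_im z
  -- second equality
  have habsim : |w.im| = |lam.im| / ‖z‖ ^ 2 := by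
    rw [hwim, hzim, Complex.sq_norm, abs_div, abs_neg, abs_of_pos hns]
  -- disk condition rewritten
  have hdisk' : 2 * ((Λ0 - μ0) / 2) * z.re ≤ Complex.normSq z := by
    have h1 : ((Λ0 - μ0) / 2) ^ 2 ≤ ‖lam - (((μ0 + Λ0) / 2 : ℝ) : ℂ)‖ ^ 2 := by
      apply sq_le_sq' _ hdisk
      linarith [norm_nonneg (lam - (((μ0 + Λ0) / 2 : ℝ) : ℂ))]
    rw [Complex.sq_norm, Complex.normSq_apply] at h1
    have hre2 : (lam - (((μ0 + Λ0) / 2 : ℝ) : ℂ)).re = z.re - (Λ0 - μ0) / 2 := by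
      simp [hz]; ring
    have him2 : (lam - (((μ0 + Λ0) / 2 : ℝ) : ℂ)).im = z.im := by simp [hz]
    rw [hre2, him2] at h1
    rw [Complex.normSq_apply]
    nlinarith
  have hwre0 : 0 ≤ w.re := by
    rw [hwre]
    apply div_nonneg _ hns.le
    rw [hzre]; linarith
  have hwrec : w.re ≤ 1 / (Λ0 - μ0) := by
    rw [hwre, div_le_div_iff₀ hns hr]
    nlinarith
  -- lower bounds via: every point of the sets is real
  have key : ∀ (u : ℂ) (y : ℂ), y.im = 0 → |u.im| ≤ dist u y := by
    intro u y hy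
    have : |(u - y).im| ≤ ‖u - y‖ := Complex.abs_im_le_norm _
    simpa [Complex.sub_im, hy, Complex.dist_eq] using this
  refine ⟨⟨?_, habsim⟩, ?_⟩
  · -- infDist for φ(λ)
    set S : Set ℂ := (fun z : ℂ => (z - (μ0 : ℂ))⁻¹) '' (Complex.ofReal '' Set.Ici Λ0) with hS
    have hSim : ∀ y ∈ S, y.im = 0 := by
      rintro y ⟨-, ⟨x, hx, rfl⟩, rfl⟩
      show (((x : ℂ) - (μ0 : ℂ))⁻¹).im = 0
      have : ((x : ℂ) - (μ0 : ℂ))⁻¹ = (((x - μ0)⁻¹ : ℝ) : ℂ) := by push_cast; ring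
      rw [this]; simp
    have hSne : S.Nonempty := ⟨((Λ0 : ℂ) - μ0)⁻¹, ⟨(Λ0 : ℂ), ⟨Λ0, Set.self_mem_Ici, rfl⟩, rfl⟩⟩
    refine le_antisymm ?_ ?_
    · -- upper bound: for every ε > 0
      refine le_of_forall_pos_le_add ?_
      intro ε hε
      set a : ℝ := max w.re (min ε (1 / (Λ0 - μ0))) with ha
      have ha0 : 0 < a := lt_of_lt_of_le (lt_min hε (by positivity)) (le_max_right _ _)
      have hac : a ≤ 1 / (Λ0 - μ0) :=
        max_le hwrec (min_le_right _ _)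
      have haw : w.re ≤ a := le_max_left _ _
      have hawε : a - w.re ≤ ε := by
        rcases max_cases w.re (min ε (1 / (Λ0 - μ0))) with ⟨h1, h2⟩ | ⟨h1, h2⟩
        · rw [ha, h1]; linarith
        · rw [ha, h1]
          have := min_le_left ε (1 / (Λ0 - μ0))
          linarith
      set t : ℝ := μ0 + 1 / a with ht
      have htΛ : Λ0 ≤ t := by
        have : Λ0 - μ0 ≤ 1 / a := by
          rw [le_one_div hr ha0]; exact hac
        rw [ht]; linarith
      have hta : ((t : ℂ) - (μ0 : ℂ))⁻¹ = (a : ℂ) := by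
        rw [ht]; push_cast
        rw [add_sub_cancel_left, one_div, inv_inv]
      have hmem : (a : ℂ) ∈ S := ⟨(t : ℂ), ⟨t, htΛ, rfl⟩, hta⟩
      have hd : dist w (a : ℂ) ≤ |w.im| + ε := by
        rw [Complex.dist_eq]
        calc ‖w - (a : ℂ)‖ ≤ |(w - (a : ℂ)).re| + |(w - (a : ℂ)).im| :=
              Complex.norm_le_abs_re_add_abs_im _
        _ = |w.re - a| + |w.im| := by simp
        _ ≤ ε + |w.im| := by
              have : |w.re - a| = a - w.re := by rw [abs_sub_comm, abs_of_nonneg (by linarith)]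
              rw [this]; linarith
        _ = |w.im| + ε := by ring
      exact le_trans (Metric.infDist_le_dist_of_mem hmem) hd
    · -- lower bound
      by_contra hcon
      rw [not_le, Metric.infDist_lt_iff hSne] at hcon
      obtain ⟨y, hy, hd⟩ := hcon
      exact absurd hd (not_lt.mpr (key w y (hSim y hy)))
  · -- third part
    intro hreΛ
    set S' : Set ℂ := Complex.ofReal '' Set.Ici Λ0 with hS'
    have hS'ne : S'.Nonempty := ⟨(Λ0 : ℂ), Λ0, Set.self_mem_Ici, rfl⟩
    refine le_antisymm ?_ ?_
    · have hmem : ((lam.re : ℝ) : ℂ) ∈ S' := ⟨lam.re, hreΛ, rfl⟩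
      have hd : dist lam ((lam.re : ℝ) : ℂ) = |lam.im| := by
        rw [Complex.dist_eq, Complex.norm_def, Complex.normSq_apply]
        simp [Real.sqrt_mul_self_eq_abs]
      exact hd ▸ Metric.infDist_le_dist_of_mem hmem
    · by_contra hcon
      rw [not_le, Metric.infDist_lt_iff hS'ne] at hcon
      obtain ⟨y, hy, hd⟩ := hcon
      obtain ⟨x, -, rfl⟩ := hy
      exact absurd hd (not_lt.mpr (key lam x (by simp)))
end

section
/- Suppose the series ∑_{k} dist(λ_k, [0,∞))^q · dist(λ_k, S)^r / (1 + |λ_k|)^γ converges, that the sequence (λ_k) converges to the Landau level Λ_J = 2·b·d·J for some J ∈ ℕ, and that the convergence is non-tangential, i.e. there is a constant C > 0 such that |Re(λ_k) − Λ_J| ≤ C·|Im(λ_k)| for every k. Then the series ∑_{k} dist(λ_k, S)^{q + r} converges. -/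
/-- Corollary (ii) b) of Theorem 5.1: if the weighted series converges and `λ_k`
converges non-tangentially to the Landau level `Λ_J = 2bdJ`, then
`∑ k, dist(λ_k, S)^{q + r}` converges, with `q = p/2 + 1 + ε` and
`r = (p/4 - 1 + ε)₊`. -/
theorem stmt_16 (b : ℝ) (hb : 0 < b) (d : ℕ) (hd : 1 ≤ d)
    (p ε γ : ℝ) (hp : 2 ≤ p) (hε0 : 0 < ε) (hε1 : ε < 1) (hγ : (d : ℝ) + 3 / 2 < γ)
    (lam : ℕ → ℂ)
    (h : Summable fun k : ℕ =>
      Metric.infDist (lam k) (Complex.ofReal '' Set.Ici 0) ^ (p / 2 + 1 + ε) *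
        Metric.infDist (lam k) (Set.range fun j : ℕ => ((2 * b * d * j : ℝ) : ℂ)) ^
          (max (p / 4 - 1 + ε) 0) /
        (1 + ‖lam k‖) ^ γ)
    (J : ℕ)
    (hconv : Filter.Tendsto lam Filter.atTop (nhds ((2 * b * d * J : ℝ) : ℂ)))
    (C : ℝ) (hC : 0 < C)
    (hnontan : ∀ k, |(lam k).re - 2 * b * d * J| ≤ C * |(lam k).im|) :
    Summable fun k : ℕ =>
      Metric.infDist (lam k) (Set.range fun j : ℕ => ((2 * b * d * j : ℝ) : ℂ)) ^
        (p / 2 + 1 + ε + max (p / 4 - 1 + ε) 0) := by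
  set q : ℝ := p / 2 + 1 + ε with hq
  set r : ℝ := max (p / 4 - 1 + ε) 0 with hr
  have hq0 : 0 < q := by
    have hp2 : (0:ℝ) < p / 2 := by linarith
    simp only [hq]; linarith
  have hr0 : 0 ≤ r := le_max_right _ _
  have hγ0 : 0 ≤ γ := by
    have : (1:ℝ) ≤ (d:ℝ) := by exact_mod_cast hd
    linarith
  -- Boundedness of the sequence
  obtain ⟨M0, hM0⟩ := (hconv.norm).bddAbove_range
  have hM0' : ∀ k, ‖lam k‖ ≤ M0 := fun k => hM0 ⟨k, rfl⟩
  have hM00 : 0 ≤ M0 := le_trans (norm_nonneg _) (hM0' 0)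
  set M : ℝ := (1 + M0) ^ γ with hM
  have hMpos : 0 < M := Real.rpow_pos_of_pos (by linarith) _
  have hMbd : ∀ k, (1 + ‖lam k‖) ^ γ ≤ M := fun k =>
    Real.rpow_le_rpow (by positivity) (by linarith [hM0' k]) hγ0
  apply Summable.of_nonneg_of_le
    (f := fun k => (C + 1) ^ q * M *
      (Metric.infDist (lam k) (Complex.ofReal '' Set.Ici 0) ^ q *
        Metric.infDist (lam k) (Set.range fun j : ℕ => ((2 * b * d * j : ℝ) : ℂ)) ^ r /
        (1 + ‖lam k‖) ^ γ))
  · intro k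
    exact Real.rpow_nonneg Metric.infDist_nonneg _
  · intro k
    set D := Metric.infDist (lam k) (Complex.ofReal '' Set.Ici 0) with hD
    set Sk := Metric.infDist (lam k)
      (Set.range fun j : ℕ => ((2 * b * d * j : ℝ) : ℂ)) with hSk
    have hD0 : 0 ≤ D := Metric.infDist_nonneg
    have hS0 : 0 ≤ Sk := Metric.infDist_nonneg
    have hden : 0 < (1 + ‖lam k‖) ^ γ :=
      Real.rpow_pos_of_pos (by positivity) _
    -- |Im λ| ≤ D
    have hAD : |(lam k).im| ≤ D := by
      by_contra hlt
      push_neg at hlt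
      have hne : (Complex.ofReal '' Set.Ici 0).Nonempty :=
        ⟨(0:ℂ), ⟨(0:ℝ), Set.mem_Ici.mpr le_rfl, by simp⟩⟩
      obtain ⟨y, hy, hylt⟩ := (Metric.infDist_lt_iff hne).mp hlt
      obtain ⟨t, _, rfl⟩ := hy
      have hge : |(lam k).im| ≤ dist (lam k) ((t:ℝ):ℂ) := by
        rw [Complex.dist_eq]
        calc |(lam k).im| = |((lam k) - (t:ℂ)).im| := by simp
          _ ≤ ‖(lam k) - (t:ℂ)‖ := Complex.abs_im_le_norm _
      linarith
    -- Sk ≤ (C+1) * D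
    have h1 : Sk ≤ (C + 1) * D := by
      have hmem : ((2 * b * d * J : ℝ) : ℂ) ∈
          Set.range fun j : ℕ => ((2 * b * d * j : ℝ) : ℂ) := ⟨J, rfl⟩
      have h2 : Sk ≤ dist (lam k) ((2 * b * d * J : ℝ) : ℂ) :=
        Metric.infDist_le_dist_of_mem hmem
      have h3 : dist (lam k) ((2 * b * d * J : ℝ) : ℂ) ≤
          |(lam k).re - 2 * b * d * J| + |(lam k).im| := by
        rw [Complex.dist_eq]
        refine (Complex.norm_le_abs_re_add_abs_im _).trans_eq ?_
        simp [Complex.sub_re, Complex.sub_im]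
      have h4 : |(lam k).re - 2 * b * d * J| + |(lam k).im| ≤ (C + 1) * |(lam k).im| := by
        have := hnontan k
        nlinarith [abs_nonneg (lam k).im]
      have h5 : (C + 1) * |(lam k).im| ≤ (C + 1) * D :=
        mul_le_mul_of_nonneg_left hAD (by linarith)
      linarith
    calc Sk ^ (q + r) = Sk ^ q * Sk ^ r := Real.rpow_add' hS0 (by positivity)
      _ ≤ ((C + 1) * D) ^ q * Sk ^ r :=
          mul_le_mul_of_nonneg_right (Real.rpow_le_rpow hS0 h1 hq0.le)
            (Real.rpow_nonneg hS0 _)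
      _ = (C + 1) ^ q * (D ^ q * Sk ^ r) := by
          rw [Real.mul_rpow (by linarith) hD0]; ring
      _ = (C + 1) ^ q * ((D ^ q * Sk ^ r / (1 + ‖lam k‖) ^ γ) *
            ((1 + ‖lam k‖) ^ γ)) := by
          rw [div_mul_cancel₀ _ hden.ne']
      _ ≤ (C + 1) ^ q * ((D ^ q * Sk ^ r / (1 + ‖lam k‖) ^ γ) * M) :=
          mul_le_mul_of_nonneg_left
            (mul_le_mul_of_nonneg_left (hMbd k) (by positivity))
            (Real.rpow_nonneg (by linarith) _)
      _ = (C + 1) ^ q * M * (D ^ q * Sk ^ r / (1 + ‖lam k‖) ^ γ) := by ring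
  · exact h.mul_left _
end
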